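/- For every integer n ≥ 1, 2·Σ_{m=1}^n (−1)^m·A_{nm}·m = (−1)^n + 1/A_{n0}. -/

import Mathlib

open Finset

/-- The coefficient `A_{nm} := Γ(n+m+1/2) / ((2m-1)·(n-m)!·m!·Γ(m+1/2))`. -/
noncomputable def Acoef (n m : ℕ) : ℝ :=
  Real.Gamma ((n : ℝ) + m + 1 / 2) /
    ((2 * (m : ℝ) - 1) * (Nat.factorial (n - m) : ℝ) * (Nat.factorial m : ℝ) *
      Real.Gamma ((m : ℝ) + 1 / 2))

/-!
Put `B n m = C(n+m, 2m) · C(2(n+m), n+m) / 4ⁿ`; then `(-1)^(n-m) B n m` is the coefficient of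
`x^(2m)` in the Legendre polynomial `P_{2n}`, and it vanishes for `m > n`. The half-integer values
`Γ(k + 1/2) = k! · C(2k, k) · √π / 4ᵏ` give `A n m = B n m / (2m - 1)` for `m ≤ n`, hence
`2m · A n m = B n m + A n m` and `A n 0 = -B n 0`. The claim thus splits into
`∑ₘ (-1)^m B n m = (-1)^n` (that is, `P_{2n}(1) = 1`) and `∑ₘ (-1)^m A n m = 1 / A n 0`.
Both sums are evaluated by creative telescoping: Zeilberger certificates turn them into the
first-order recurrences `S (n+1) = -S n` and `(2n+1) T (n+1) = (2n+2) T n`.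
-/

open Nat

section CharZeroField

variable {K : Type*} [Field K] [CharZero K]

lemma cast_centralBinom_succ (N : ℕ) :
    (centralBinom (N + 1) : K) = 2 * (2 * N + 1) / (N + 1) * centralBinom N := by
  rw [div_mul_eq_mul_div, eq_div_iff N.cast_add_one_ne_zero, mul_comm]
  exact_mod_cast succ_mul_centralBinom_succ N

lemma cast_choose_succ_succ (N k : ℕ) :
    ((N + 1).choose (k + 1) : K) = (N + 1) / (k + 1) * N.choose k := by
  rw [div_mul_eq_mul_div, eq_div_iff k.cast_add_one_ne_zero]
  exact_mod_cast (add_one_mul_choose_eq N k).symm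

lemma cast_choose_succ_right (N k : ℕ) :
    (N.choose (k + 1) : K) = (N - k) / (k + 1) * N.choose k := by
  rw [div_mul_eq_mul_div, eq_div_iff k.cast_add_one_ne_zero]
  rcases le_or_gt k N with h | h
  · rw [mul_comm _ (N.choose k : K), ← Nat.cast_sub h]
    exact_mod_cast choose_succ_right_eq N k
  · simp [choose_eq_zero_of_lt h, choose_eq_zero_of_lt (h.trans (lt_add_one k))]

lemma two_mul_natCast_sub_one_ne_zero (m : ℕ) : 2 * (m : K) - 1 ≠ 0 := by
  rw [sub_ne_zero]
  exact_mod_cast (by omega : 2 * m ≠ 1)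

end CharZeroField

lemma Gamma_nat_add_half_eq_factorial_mul_centralBinom (k : ℕ) :
    Real.Gamma (k + 1 / 2) = k ! * centralBinom k / 4 ^ k * √Real.pi := by
  induction k with
  | zero => simp [-one_div, Real.Gamma_one_half_eq]
  | succ k ih =>
    rw [Nat.cast_succ, add_right_comm, Real.Gamma_add_one (by positivity), ih,
      cast_centralBinom_succ, factorial_succ]
    push_cast
    field_simp
    ring

noncomputable def Bcoef (n m : ℕ) : ℝ := (n + m).choose (2 * m) * centralBinom (n + m) / 4 ^ n

lemma Bcoef_eq_zero {n m : ℕ} (h : n < m) : Bcoef n m = 0 := by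
  rw [Bcoef, choose_eq_zero_of_lt (by omega)]; simp

lemma Bcoef_zero_right (n : ℕ) : Bcoef n 0 = centralBinom n / 4 ^ n := by
  simp [Bcoef]

lemma Bcoef_succ_zero (n : ℕ) :
    Bcoef (n + 1) 0 = (2 * n + 1) / (2 * (n + 1)) * Bcoef n 0 := by
  rw [Bcoef_zero_right, Bcoef_zero_right, cast_centralBinom_succ]
  field_simp
  ring

lemma Bcoef_succ_succ (n m : ℕ) :
    Bcoef (n + 1) (m + 1) =
      (2 * (n + m : ℝ) + 3) * (2 * (n + m) + 1) / (2 * (m + 1) * (2 * m + 1)) * Bcoef n m := by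
  rw [Bcoef, Bcoef, show n + 1 + (m + 1) = n + m + 1 + 1 by ring,
    show 2 * (m + 1) = 2 * m + 1 + 1 by ring]
  simp only [cast_centralBinom_succ, cast_choose_succ_succ]
  push_cast
  field_simp
  ring

lemma Bcoef_succ_right (n m : ℕ) :
    Bcoef n (m + 1) = (2 * (n + m : ℝ) + 1) * (n - m) / ((m + 1) * (2 * m + 1)) * Bcoef n m := by
  rw [Bcoef, Bcoef, show n + (m + 1) = n + m + 1 by ring,
    show 2 * (m + 1) = 2 * m + 1 + 1 by ring]
  simp only [cast_centralBinom_succ, cast_choose_succ_succ, cast_choose_succ_right]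
  push_cast
  field_simp
  ring

lemma Acoef_eq {n m : ℕ} (h : m ≤ n) : Acoef n m = Bcoef n m / (2 * m - 1) := by
  have hchoose : ((n + m).choose (2 * m) : ℝ) * (2 * m)! * (n - m)! = (n + m)! := by
    rw [show n - m = n + m - 2 * m by omega]
    exact_mod_cast choose_mul_factorial_mul_factorial (by omega)
  have hcentral : (centralBinom m : ℝ) * m ! * m ! = (2 * m)! := by
    rw [centralBinom_eq_two_mul_choose]
    have := choose_mul_factorial_mul_factorial (n := 2 * m) (k := m) (by omega)
    rw [show 2 * m - m = m by omega] at this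
    exact_mod_cast this
  rw [Acoef, Bcoef, show (n : ℝ) + m + 1 / 2 = ((n + m : ℕ) : ℝ) + 1 / 2 by push_cast; ring,
    Gamma_nat_add_half_eq_factorial_mul_centralBinom,
    Gamma_nat_add_half_eq_factorial_mul_centralBinom]
  have := two_mul_natCast_sub_one_ne_zero (K := ℝ) m
  have : (centralBinom m : ℝ) ≠ 0 := by exact_mod_cast (centralBinom_pos m).ne'
  field_simp
  linear_combination (-(centralBinom (n + m) : ℝ) * 4 ^ (n + m)) * hchoose -
    (centralBinom (n + m) : ℝ) * 4 ^ (n + m) * (n + m).choose (2 * m) * (n - m)! * hcentral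

lemma sum_range_telescope_combination {R : Type*} [Ring R] {f g G : ℕ → R} {α β : R} {K : ℕ}
    (hG : ∀ m, α * f m + β * g m = G (m + 1) - G m) (h0 : G 0 = 0) (hK : G K = 0) :
    α * ∑ m ∈ range K, f m + β * ∑ m ∈ range K, g m = 0 := by
  rw [mul_sum, mul_sum, ← sum_add_distrib, sum_congr rfl fun m _ ↦ hG m, sum_range_sub, h0, hK,
    sub_zero]

noncomputable def altBcoefCert (n : ℕ) : ℕ → ℝ
  | 0 => 0
  | m + 1 => (4 * n + 3) * (2 * n + 2 * m + 1) / ((2 * n + 1) * (2 * n + 2)) * ((-1) ^ m * Bcoef n m)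

noncomputable def altBcoefDivCert (n : ℕ) : ℕ → ℝ
  | 0 => 0
  | m + 1 => (4 * n + 3) * (4 * m * (m + n) - (2 * n + 1)) / ((2 * n + 1) * (2 * n + 2)) *
      ((-1) ^ m * Bcoef n m / (2 * m - 1))

lemma altBcoefCert_succ_sub (n m : ℕ) :
    altBcoefCert n (m + 1) - altBcoefCert n m =
      (-1) ^ m * Bcoef (n + 1) m + (-1) ^ m * Bcoef n m := by
  cases m with
  | zero =>
    simp only [altBcoefCert, Bcoef_succ_zero]
    field_simp
    ring
  | succ k =>
    simp only [altBcoefCert, Bcoef_succ_succ, Bcoef_succ_right]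
    push_cast
    field_simp
    ring

lemma altBcoefDivCert_succ_sub (n m : ℕ) :
    altBcoefDivCert n (m + 1) - altBcoefDivCert n m =
      (2 * n + 1) * ((-1) ^ m * Bcoef (n + 1) m / (2 * m - 1)) -
        (2 * n + 2) * ((-1) ^ m * Bcoef n m / (2 * m - 1)) := by
  symm
  cases m with
  | zero =>
    simp only [altBcoefDivCert, Bcoef_succ_zero]
    field_simp
    ring
  | succ k =>
    have h1 := two_mul_natCast_sub_one_ne_zero (K := ℝ) k
    have h2 := two_mul_natCast_sub_one_ne_zero (K := ℝ) (k + 1)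
    push_cast at h2
    simp only [altBcoefDivCert, Bcoef_succ_succ, Bcoef_succ_right]
    push_cast
    field_simp
    ring

lemma sum_range_alternating_Bcoef (n : ℕ) :
    ∑ m ∈ range (n + 1), (-1) ^ m * Bcoef n m = (-1) ^ n := by
  induction n with
  | zero => simp [Bcoef]
  | succ n ih =>
    have h := sum_range_telescope_combination (R := ℝ) (α := 1) (β := 1) (K := n + 1 + 1)
      (fun m ↦ by simpa using (altBcoefCert_succ_sub n m).symm) rfl
      (by simp [altBcoefCert, Bcoef_eq_zero (lt_add_one n)])
    rw [sum_range_succ (fun m ↦ (-1) ^ m * Bcoef n m), Bcoef_eq_zero (lt_add_one n), ih] at h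
    linear_combination h

lemma Bcoef_zero_right_ne_zero (n : ℕ) : Bcoef n 0 ≠ 0 := by
  rw [Bcoef_zero_right]
  exact div_ne_zero (by exact_mod_cast (centralBinom_pos n).ne') (by positivity)

lemma sum_range_alternating_Bcoef_div (n : ℕ) :
    ∑ m ∈ range (n + 1), (-1) ^ m * Bcoef n m / (2 * m - 1) = -(Bcoef n 0)⁻¹ := by
  induction n with
  | zero => simp [Bcoef]
  | succ n ih =>
    have h := sum_range_telescope_combination (R := ℝ) (α := 2 * n + 1) (β := -(2 * n + 2))
      (K := n + 1 + 1)
      (fun m ↦ by rw [altBcoefDivCert_succ_sub, neg_mul, ← sub_eq_add_neg]) rfl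
      (by simp [altBcoefDivCert, Bcoef_eq_zero (lt_add_one n)])
    rw [sum_range_succ (fun m ↦ (-1) ^ m * Bcoef n m / (2 * m - 1)), Bcoef_eq_zero (lt_add_one n),
      mul_zero, zero_div, add_zero, ih] at h
    have := Bcoef_zero_right_ne_zero n
    rw [Bcoef_succ_zero]
    field_simp at h ⊢
    linear_combination h

theorem stmt_5_general (n : ℕ) :
    2 * ∑ m ∈ Finset.Icc 1 n, (-1 : ℝ) ^ m * Acoef n m * m =
      (-1 : ℝ) ^ n + 1 / Acoef n 0 := by
  have hterm (m : ℕ) (hm : m ∈ Icc 1 n) : 2 * ((-1 : ℝ) ^ m * Acoef n m * m) =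
      (-1) ^ m * Bcoef n m + (-1) ^ m * Bcoef n m / (2 * m - 1) := by
    rw [Acoef_eq (mem_Icc.mp hm).2]
    have := two_mul_natCast_sub_one_ne_zero (K := ℝ) m
    field_simp
    ring
  have hsupport : Icc 1 n ⊆ range (n + 1) := fun m hm ↦ by
    simp only [mem_Icc, mem_range] at hm ⊢; omega
  calc 2 * ∑ m ∈ Icc 1 n, (-1 : ℝ) ^ m * Acoef n m * m
      = ∑ m ∈ Icc 1 n, ((-1) ^ m * Bcoef n m + (-1) ^ m * Bcoef n m / (2 * m - 1)) := by
        rw [mul_sum]; exact sum_congr rfl hterm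
    _ = ∑ m ∈ range (n + 1), ((-1) ^ m * Bcoef n m + (-1) ^ m * Bcoef n m / (2 * m - 1)) :=
        sum_subset hsupport fun m hm hm' ↦ by
          obtain rfl : m = 0 := by simp only [mem_Icc, mem_range] at hm hm'; omega
          simp [div_neg]
    _ = (-1) ^ n + 1 / Acoef n 0 := by
        rw [sum_add_distrib, sum_range_alternating_Bcoef, sum_range_alternating_Bcoef_div,
          Acoef_eq (zero_le n)]
        push_cast
        ring

/-- For every integer `n ≥ 1`,
`2·Σ_{m=1}^n (-1)^m·A_{nm}·m = (-1)^n + 1/A_{n0}`. -/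
theorem stmt_5 (n : ℕ) (hn : 1 ≤ n) :
    2 * ∑ m ∈ Finset.Icc 1 n, (-1 : ℝ) ^ m * Acoef n m * m =
      (-1 : ℝ) ^ n + 1 / Acoef n 0 :=
  stmt_5_general n
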